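/- For g(x) = (1−x²)² and any f ∈ C⁶ on a neighborhood of [−1,1], the bilinear concomitant satisfies lim_{x→1} [f,(1−x²)²]_K(x) = 192 f(1) and lim_{x→−1} [f,(1−x²)²]_K(x) = −192 f(−1). -/

import Mathlib

open Set Filter Topology intervalIntegral

noncomputable def krallAlpha (A B : ℝ) : ℝ := 3*A + 3*B + 6

noncomputable def krallPi (A B : ℝ) (x : ℝ) : ℝ :=
  (-6*A - 6*B - 12*A*B)*x^2 + (12*A - 12*B)*x + (12*A*B + 18*A + 18*B + 24)

/-- The sixth-order Krall differential expression, expanded form. -/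
noncomputable def lK (A B : ℝ) (y : ℝ → ℝ) (x : ℝ) : ℝ :=
  (x^2 - 1)^3 * iteratedDeriv 6 y x
  + 18*x*(x^2 - 1)^2 * iteratedDeriv 5 y x
  + (x^2 - 1)*((3*A + 3*B + 96)*x^2 - 3*A - 3*B - 36) * iteratedDeriv 4 y x
  + (24*A + 24*B + 168)*x*(x^2 - 1) * iteratedDeriv 3 y x
  + ((12*A*B + 42*A + 42*B + 72)*x^2 + (12*B - 12*A)*x - 12*A*B - 30*A - 30*B - 72)
      * iteratedDeriv 2 y x
  + ((24*A*B + 12*A + 12*B)*x + 12*B - 12*A) * deriv y x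

/-- The sixth-order Krall differential expression, Lagrangian symmetric form. -/
noncomputable def lKsym (A B : ℝ) (y : ℝ → ℝ) (x : ℝ) : ℝ :=
  - iteratedDeriv 3 (fun t => (1 - t^2)^3 * iteratedDeriv 3 y t) x
  + iteratedDeriv 2 (fun t => (1 - t^2)*(12 + krallAlpha A B * (1 - t^2)) * iteratedDeriv 2 y t) x
  - deriv (fun t => krallPi A B t * deriv y t) x

/-- Λ[f](x) = −((1−x²)³f‴(x))′ + (1−x²)(12+α(1−x²))f″(x). -/
noncomputable def LamK (A B : ℝ) (f : ℝ → ℝ) (x : ℝ) : ℝ :=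
  - deriv (fun t => (1 - t^2)^3 * iteratedDeriv 3 f t) x
  + (1 - x^2)*(12 + krallAlpha A B * (1 - x^2)) * iteratedDeriv 2 f x

/-- [f,1]_K(x) = −((1−x²)³f‴)″ + ((1−x²)(12+α(1−x²))f″)′ − π(x)f′(x). -/
noncomputable def concOne (A B : ℝ) (f : ℝ → ℝ) (x : ℝ) : ℝ :=
  - iteratedDeriv 2 (fun t => (1 - t^2)^3 * iteratedDeriv 3 f t) x
  + deriv (fun t => (1 - t^2)*(12 + krallAlpha A B * (1 - t^2)) * iteratedDeriv 2 f t) x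
  - krallPi A B x * deriv f x

/-- The bilinear concomitant [f,g]_K of the Krall expression (real-valued case). -/
noncomputable def conc (A B : ℝ) (f g : ℝ → ℝ) (x : ℝ) : ℝ :=
  concOne A B f x * g x - concOne A B g x * f x
  - LamK A B f x * deriv g x + LamK A B g x * deriv f x
  - (1 - x^2)^3 * (iteratedDeriv 3 f x * iteratedDeriv 2 g x
      - iteratedDeriv 2 f x * iteratedDeriv 3 g x)

/-!
The concomitant involves derivatives of `f` of order at most five, so it is continuous on `U` and
both limits are its values at `±1`. There `1 - x²`, `g = (1 - x²)²` and `g'` vanish, and so does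
`((1 - x²)³ g‴)'`, leaving `[f, g]_K(±1) = -[g, 1]_K(±1) f(±1)`. The triple zero of `(1 - x²)³`
also kills `((1 - x²)³ g‴)''` at `±1`, so by the product rule
`[g, 1]_K(±1) = (1 - x²)'(±1) · 12 · g''(±1) = ∓2 · 12 · 8 = ∓192`.
-/

open Polynomial

theorem Polynomial.iteratedDeriv_eval {𝕜 : Type*} [NontriviallyNormedField 𝕜] (p : 𝕜[X])
    (k : ℕ) : iteratedDeriv k (fun x => p.eval x) = fun x => (derivative^[k] p).eval x := by
  induction k generalizing p with
  | zero => simp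
  | succ k ih =>
    have hd : deriv (fun x => p.eval x) = fun x => p.derivative.eval x := by
      ext; exact p.deriv
    rw [iteratedDeriv_succ', hd, ih, Function.iterate_succ_apply]

section IteratedDeriv

variable {𝕜 F : Type*} [NontriviallyNormedField 𝕜] [NormedAddCommGroup F] [NormedSpace 𝕜 F]
  {f : 𝕜 → F} {s : Set 𝕜} {m n : WithTop ℕ∞} {k : ℕ}

theorem ContDiffOn.iteratedDeriv_of_isOpen (hf : ContDiffOn 𝕜 n f s) (hs : IsOpen s)
    (hmn : m + k ≤ n) : ContDiffOn 𝕜 m (iteratedDeriv k f) s := by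
  induction k generalizing f n with
  | zero => simpa using hf.of_le (by simpa using hmn)
  | succ k ih =>
    rw [iteratedDeriv_succ']
    exact ih (hf.deriv_of_isOpen hs (m := m + k) (by simpa [add_assoc] using hmn)) le_rfl

theorem ContDiffOn.continuousOn_iteratedDeriv_of_isOpen (hf : ContDiffOn 𝕜 n f s)
    (hs : IsOpen s) (hkn : k ≤ n) : ContinuousOn (iteratedDeriv k f) s :=
  (hf.iteratedDeriv_of_isOpen hs (m := 0) (by simpa using hkn)).continuousOn

end IteratedDeriv

section Continuity

variable {A B : ℝ} {f g : ℝ → ℝ} {U : Set ℝ}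

theorem continuousOn_lamK (hU : IsOpen U) (hf : ContDiffOn ℝ 4 f U) :
    ContinuousOn (LamK A B f) U := by
  have hf₂ := hf.continuousOn_iteratedDeriv_of_isOpen hU (k := 2) (by norm_num)
  have hf₃ : ContDiffOn ℝ 1 (iteratedDeriv 3 f) U := hf.iteratedDeriv_of_isOpen hU (by norm_num)
  have hP : ContDiffOn ℝ 1 (fun t => (1 - t^2)^3 * iteratedDeriv 3 f t) U := by fun_prop
  have hP₁ := hP.continuousOn_deriv_of_isOpen hU le_rfl
  unfold LamK
  fun_prop

theorem continuousOn_concOne (hU : IsOpen U) (hf : ContDiffOn ℝ 5 f U) :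
    ContinuousOn (concOne A B f) U := by
  have hf₁ := hf.continuousOn_deriv_of_isOpen hU (by norm_num)
  have hf₂ : ContDiffOn ℝ 1 (iteratedDeriv 2 f) U := hf.iteratedDeriv_of_isOpen hU (by norm_num)
  have hf₃ : ContDiffOn ℝ 2 (iteratedDeriv 3 f) U := hf.iteratedDeriv_of_isOpen hU (by norm_num)
  have hP : ContDiffOn ℝ 2 (fun t => (1 - t^2)^3 * iteratedDeriv 3 f t) U := by fun_prop
  have hQ : ContDiffOn ℝ 1
      (fun t => (1 - t^2) * (12 + krallAlpha A B * (1 - t^2)) * iteratedDeriv 2 f t) U := by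
    fun_prop
  have hP₂ := hP.continuousOn_iteratedDeriv_of_isOpen hU (k := 2) le_rfl
  have hQ₁ := hQ.continuousOn_deriv_of_isOpen hU le_rfl
  unfold concOne krallPi
  fun_prop

theorem continuousOn_conc (hU : IsOpen U) (hf : ContDiffOn ℝ 5 f U) (hg : ContDiffOn ℝ 5 g U) :
    ContinuousOn (conc A B f g) U := by
  have hCf := continuousOn_concOne (A := A) (B := B) hU hf
  have hCg := continuousOn_concOne (A := A) (B := B) hU hg
  have hLf := continuousOn_lamK (A := A) (B := B) hU (hf.of_le (by norm_num))
  have hLg := continuousOn_lamK (A := A) (B := B) hU (hg.of_le (by norm_num))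
  have hf₁ := hf.continuousOn_deriv_of_isOpen hU (by norm_num)
  have hg₁ := hg.continuousOn_deriv_of_isOpen hU (by norm_num)
  have hf₂ := hf.continuousOn_iteratedDeriv_of_isOpen hU (k := 2) (by norm_num)
  have hg₂ := hg.continuousOn_iteratedDeriv_of_isOpen hU (k := 2) (by norm_num)
  have hf₃ := hf.continuousOn_iteratedDeriv_of_isOpen hU (k := 3) (by norm_num)
  have hg₃ := hg.continuousOn_iteratedDeriv_of_isOpen hU (k := 3) (by norm_num)
  have hf₀ := hf.continuousOn
  have hg₀ := hg.continuousOn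
  unfold conc
  fun_prop

end Continuity

section PolynomialArguments

variable (A B : ℝ) (p : ℝ[X]) (x : ℝ)

theorem one_sub_sq_pow_three_mul_iteratedDeriv_three_eval :
    (fun t => (1 - t^2)^3 * iteratedDeriv 3 (fun t => p.eval t) t)
      = fun t => ((1 - X^2)^3 * derivative^[3] p).eval t := by
  simp [Polynomial.iteratedDeriv_eval]

theorem concOne_eval : concOne A B (fun t => p.eval t) x =
    -(derivative^[2] ((1 - X^2)^3 * derivative^[3] p)).eval x
      + (derivative ((1 - X^2) * (12 + C (krallAlpha A B) * (1 - X^2)) * derivative^[2] p)).eval x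
      - krallPi A B x * (derivative p).eval x := by
  have hQ : (fun t => (1 - t^2) * (12 + krallAlpha A B * (1 - t^2))
        * iteratedDeriv 2 (fun t => p.eval t) t)
      = fun t => ((1 - X^2) * (12 + C (krallAlpha A B) * (1 - X^2)) * derivative^[2] p).eval t := by
    simp [Polynomial.iteratedDeriv_eval]
  rw [concOne, one_sub_sq_pow_three_mul_iteratedDeriv_three_eval, hQ,
    Polynomial.iteratedDeriv_eval, Polynomial.deriv, Polynomial.deriv]

theorem lamK_eval : LamK A B (fun t => p.eval t) x =
    -(derivative ((1 - X^2)^3 * derivative^[3] p)).eval x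
      + (1 - x^2) * (12 + krallAlpha A B * (1 - x^2)) * (derivative^[2] p).eval x := by
  rw [LamK, one_sub_sq_pow_three_mul_iteratedDeriv_three_eval, Polynomial.deriv,
    Polynomial.iteratedDeriv_eval]

end PolynomialArguments

theorem conc_one_sub_sq_sq_of_sq_eq_one (A B : ℝ) (f : ℝ → ℝ) {x : ℝ} (hx : x ^ 2 = 1) :
    conc A B f (fun t => (1 - t^2)^2) x = 192 * x * f x := by
  have hg : (fun t : ℝ => (1 - t^2)^2) = fun t => ((1 - X^2)^2 : ℝ[X]).eval t := by
    ext; simp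
  rw [conc, hg, concOne_eval, lamK_eval, Polynomial.deriv, Polynomial.iteratedDeriv_eval,
    Polynomial.iteratedDeriv_eval]
  obtain rfl | rfl := sq_eq_one_iff.mp hx <;> norm_num [derivative_pow, derivative_mul, krallPi]

theorem krall_concomitant_with_one_minus_sq_squared_general (A B : ℝ)
    (f : ℝ → ℝ) (U : Set ℝ) (hU : IsOpen U) (hUI : Set.Icc (-1 : ℝ) 1 ⊆ U)
    (hf : ContDiffOn ℝ 6 f U) :
    Filter.Tendsto (fun x => conc A B f (fun t => (1 - t^2)^2) x)
      (nhdsWithin 1 (Set.Ioo (-1 : ℝ) 1)) (nhds (192 * f 1)) ∧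
    Filter.Tendsto (fun x => conc A B f (fun t => (1 - t^2)^2) x)
      (nhdsWithin (-1) (Set.Ioo (-1 : ℝ) 1)) (nhds (-192 * f (-1))) := by
  have hg : ContDiff ℝ 5 fun t : ℝ => (1 - t^2)^2 := by fun_prop
  have hcont : ContinuousOn (conc A B f fun t => (1 - t^2)^2) U :=
    continuousOn_conc hU (hf.of_le (by norm_num)) hg.contDiffOn
  have hlim : ∀ x ∈ U, Tendsto (conc A B f fun t => (1 - t^2)^2) (𝓝[Ioo (-1) 1] x)
      (𝓝 (conc A B f (fun t => (1 - t^2)^2) x)) := fun x hx =>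
    ((hcont x hx).continuousAt (hU.mem_nhds hx)).tendsto.mono_left nhdsWithin_le_nhds
  constructor
  · simpa [conc_one_sub_sq_sq_of_sq_eq_one] using hlim 1 (hUI (by norm_num))
  · simpa [conc_one_sub_sq_sq_of_sq_eq_one] using hlim (-1) (hUI (by norm_num))

/-- lim_{x→±1} [f,(1−x²)²]_K(x) = ±192 f(±1). -/
theorem krall_concomitant_with_one_minus_sq_squared (A B : ℝ) (hA : 0 < A) (hB : 0 < B)
    (f : ℝ → ℝ) (U : Set ℝ) (hU : IsOpen U) (hUI : Set.Icc (-1 : ℝ) 1 ⊆ U)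
    (hf : ContDiffOn ℝ 6 f U) :
    Filter.Tendsto (fun x => conc A B f (fun t => (1 - t^2)^2) x)
      (nhdsWithin 1 (Set.Ioo (-1 : ℝ) 1)) (nhds (192 * f 1)) ∧
    Filter.Tendsto (fun x => conc A B f (fun t => (1 - t^2)^2) x)
      (nhdsWithin (-1) (Set.Ioo (-1 : ℝ) 1)) (nhds (-192 * f (-1))) :=
  krall_concomitant_with_one_minus_sq_squared_general A B f U hU hUI hf
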